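/- arXiv:1910.12165 — 2 statements merged into one kernel-verified Lean document; each statement's English description precedes it below -/
import Mathlib

section
/- Let L : ℝⁿ → ℝ be C¹ with ∇L M-Lipschitz (Euclidean norm). Then |sup_{‖α‖_∞ ≤ ε} L(x+α) − (L(x) + ε‖∇L(x)‖₁)| ≤ (M·n/2)·ε². -/
/-! Along the segment `t ↦ x + t • α` the derivative of `L` drifts from `⟪∇L x, α⟫` by at most
`M ‖α‖² t`, so `L (x + α) = L x + ⟪∇L x, α⟫` up to `(M / 2) ‖α‖² ≤ (M n / 2) ε²` on the `ℓ^∞` ball.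
The linear term is maximised over that ball by `α = ε • sign (∇L x)`, with value `ε ‖∇L x‖₁`, and
a uniform perturbation of size `δ` moves a supremum by at most `δ`. -/

open Set
open scoped RealInnerProductSpace

theorem norm_sub_sub_smul_deriv_le_of_norm_deriv_sub_le {E : Type*} [NormedAddCommGroup E]
    [NormedSpace ℝ E] {f f' : ℝ → E} {K b : ℝ} (hb : 0 ≤ b)
    (hf : ∀ t, HasDerivAt f (f' t) t) (bound : ∀ t ∈ Icc 0 b, ‖f' t - f' 0‖ ≤ K * t) :
    ‖f b - f 0 - b • f' 0‖ ≤ K / 2 * b ^ 2 := by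
  have hremainder : ∀ t, HasDerivAt (fun t => f t - f 0 - t • f' 0) (f' t - f' 0) t := fun t =>
    ((hf t).sub_const (f 0)).sub (by simpa using (hasDerivAt_id t).smul_const (f' 0))
  have hquad : ∀ t, HasDerivAt (fun t => K / 2 * t ^ 2) (K * t) t := fun t =>
    ((hasDerivAt_pow 2 t).const_mul (K / 2)).congr_deriv (by push_cast; ring)
  refine image_norm_le_of_norm_deriv_right_le_deriv_boundary
    (fun t _ => (hremainder t).continuousAt.continuousWithinAt)
    (fun t _ => (hremainder t).hasDerivWithinAt) (by simp) hquad
    (fun t ht => bound t (Ico_subset_Icc_self ht)) (right_mem_Icc.2 hb)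

section Gradient

variable {E : Type*} [NormedAddCommGroup E] [InnerProductSpace ℝ E] [CompleteSpace E]

theorem abs_sub_sub_inner_gradient_le {L : E → ℝ} (hL : Differentiable ℝ L) {M : ℝ}
    (hLip : ∀ u v, ‖gradient L u - gradient L v‖ ≤ M * ‖u - v‖) (x α : E) :
    |L (x + α) - L x - ⟪gradient L x, α⟫| ≤ M / 2 * ‖α‖ ^ 2 := by
  have hderiv : ∀ t : ℝ, HasDerivAt (fun t : ℝ => L (x + t • α))
      ⟪gradient L (x + t • α), α⟫ t := fun t => by
    have hline : HasDerivAt (fun t : ℝ => x + t • α) α t := by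
      simpa using ((hasDerivAt_id t).smul_const α).const_add x
    simpa [Function.comp_def] using
      (hL _).hasGradientAt.hasFDerivAt.comp_hasDerivAt t hline
  have bound : ∀ t ∈ Icc (0 : ℝ) 1,
      ‖⟪gradient L (x + t • α), α⟫ - ⟪gradient L (x + (0 : ℝ) • α), α⟫‖ ≤ M * ‖α‖ ^ 2 * t := by
    intro t ht
    rw [← inner_sub_left, Real.norm_eq_abs]
    calc _ ≤ ‖gradient L (x + t • α) - gradient L (x + (0 : ℝ) • α)‖ * ‖α‖ :=
          abs_real_inner_le_norm _ _
      _ ≤ M * ‖(x + t • α) - (x + (0 : ℝ) • α)‖ * ‖α‖ := by gcongr; exact hLip _ _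
      _ = M * ‖α‖ ^ 2 * t := by
          simp only [zero_smul, add_zero, add_sub_cancel_left, norm_smul, Real.norm_eq_abs,
            abs_of_nonneg ht.1]
          ring
  simpa [mul_div_right_comm] using
    norm_sub_sub_smul_deriv_le_of_norm_deriv_sub_le zero_le_one hderiv bound

end Gradient

section LInftyBall

variable {ι : Type*} [Fintype ι]

theorem EuclideanSpace.norm_sq_le_card_mul_sq {α : EuclideanSpace ℝ ι} {ε : ℝ}
    (hα : ∀ i, |α i| ≤ ε) : ‖α‖ ^ 2 ≤ Fintype.card ι * ε ^ 2 := by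
  rw [EuclideanSpace.norm_sq_eq]
  calc ∑ i, ‖α i‖ ^ 2 ≤ ∑ _i : ι, ε ^ 2 := Finset.sum_le_sum fun i _ => by
        rw [Real.norm_eq_abs]; exact pow_le_pow_left₀ (abs_nonneg _) (hα i) 2
    _ = Fintype.card ι * ε ^ 2 := by simp

theorem EuclideanSpace.isGreatest_inner_image_abs_le {ε : ℝ} (hε : 0 ≤ ε)
    (g : EuclideanSpace ℝ ι) :
    IsGreatest ((fun α => ⟪g, α⟫) '' {α | ∀ i, |α i| ≤ ε}) (ε * ∑ i, |g i|) := by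
  have inner_eq : ∀ α : EuclideanSpace ℝ ι, ⟪g, α⟫ = ∑ i, g i * α i := fun α => by
    simp [PiLp.inner_apply, mul_comm]
  refine ⟨⟨WithLp.toLp 2 fun i => ε * SignType.sign (g i), fun i => ?_, ?_⟩, ?_⟩
  · rcases lt_trichotomy (g i) 0 with h | h | h <;> simp [h, abs_of_nonneg hε, hε]
  · simp only [inner_eq, Finset.mul_sum]
    exact Finset.sum_congr rfl fun i _ => by rw [mul_left_comm, self_mul_sign]
  · rintro _ ⟨α, hα, rfl⟩
    simp only [inner_eq, Finset.mul_sum]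
    refine Finset.sum_le_sum fun i _ => ?_
    calc g i * α i ≤ |g i| * |α i| := (le_abs_self _).trans (abs_mul _ _).le
      _ ≤ ε * |g i| := by rw [mul_comm ε]; exact mul_le_mul_of_nonneg_left (hα i) (abs_nonneg _)

end LInftyBall

theorem abs_sSup_image_sub_le_of_isGreatest {β : Type*} {S : Set β} {f φ : β → ℝ} {c m δ : ℝ}
    (hφ : IsGreatest (φ '' S) m) (hf : ∀ a ∈ S, |f a - c - φ a| ≤ δ) :
    |sSup (f '' S) - (c + m)| ≤ δ := by
  obtain ⟨⟨a₀, ha₀, rfl⟩, hm⟩ := hφ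
  have hupper : ∀ y ∈ f '' S, y ≤ c + φ a₀ + δ := by
    rintro _ ⟨a, ha, rfl⟩
    have hφa : φ a ≤ φ a₀ := hm ⟨a, ha, rfl⟩
    linarith [(abs_le.1 (hf a ha)).2]
  have hlower : c + φ a₀ - δ ≤ sSup (f '' S) :=
    calc c + φ a₀ - δ ≤ f a₀ := by linarith [(abs_le.1 (hf a₀ ha₀)).1]
      _ ≤ sSup (f '' S) := le_csSup ⟨_, hupper⟩ ⟨a₀, ha₀, rfl⟩
  rw [abs_le]
  constructor <;> linarith [csSup_le (Set.Nonempty.image f ⟨a₀, ha₀⟩) hupper]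

/-- with `∇L` `M`-Lipschitz (Euclidean norm), the worst-case loss over the
`ℓ^∞` ball of radius `ε` equals `L x + ε ‖∇L x‖₁` up to `(M n / 2) ε²`. -/
theorem adv_training_first_order (n : ℕ) (L : EuclideanSpace ℝ (Fin n) → ℝ)
    (hL : ContDiff ℝ 1 L) (M : ℝ) (hM : 0 ≤ M)
    (hLip : ∀ u v : EuclideanSpace ℝ (Fin n),
      ‖gradient L u - gradient L v‖ ≤ M * ‖u - v‖)
    (x : EuclideanSpace ℝ (Fin n)) (ε : ℝ) (hε : 0 ≤ ε) :
    |sSup ((fun α : EuclideanSpace ℝ (Fin n) => L (x + α)) '' {α | ∀ i, |α i| ≤ ε})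
        - (L x + ε * ∑ i, |gradient L x i|)| ≤ M * n / 2 * ε ^ 2 := by
  refine abs_sSup_image_sub_le_of_isGreatest
    (EuclideanSpace.isGreatest_inner_image_abs_le hε (gradient L x)) fun α hα => ?_
  calc |L (x + α) - L x - ⟪gradient L x, α⟫| ≤ M / 2 * ‖α‖ ^ 2 :=
        abs_sub_sub_inner_gradient_le (hL.differentiable one_ne_zero) hLip x α
    _ ≤ M / 2 * (n * ε ^ 2) := by
        gcongr
        simpa using EuclideanSpace.norm_sq_le_card_mul_sq hα
    _ = M * n / 2 * ε ^ 2 := by ring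
end

section
/- Suppose L : ℝⁿ → ℝ is C¹, L(x) < c, and ε·γ(x,ε) < c − L(x), where γ(x,ε) = sup_{x' ∈ B_∞(x,ε)} ‖∇L(x')‖₁. Then L(x') < c for all x' ∈ B_∞(x,ε). -/
/-! The flatness `γ(x, ε)` bounds the operator norm of `fderiv L` on the whole ball, because the
`ℓ¹` norm of the coordinates of a linear functional dominates its norm dual to the sup norm. The
mean value inequality on the convex ball then gives `L x' ≤ L x + ε γ(x, ε) < c`. -/

open Metric

theorem ContinuousLinearMap.opNorm_le_sum_norm_apply_single {ι F : Type*} [Fintype ι]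
    [DecidableEq ι] [NormedAddCommGroup F] [NormedSpace ℝ F] (f : (ι → ℝ) →L[ℝ] F) :
    ‖f‖ ≤ ∑ i, ‖f (Pi.single i 1)‖ := by
  refine f.opNorm_le_bound (by positivity) fun v => ?_
  calc ‖f v‖ = ‖∑ i, v i • f (Pi.single i 1)‖ := by
        conv_lhs => rw [pi_eq_sum_univ' v]
        simp only [map_sum, map_smul]
    _ ≤ ∑ i, ‖v i • f (Pi.single i 1)‖ := norm_sum_le _ _
    _ ≤ ∑ i, ‖v‖ * ‖f (Pi.single i 1)‖ := by
        gcongr with i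
        rw [norm_smul]
        gcongr
        exact norm_le_pi_norm v i
    _ = (∑ i, ‖f (Pi.single i 1)‖) * ‖v‖ := by rw [← Finset.mul_sum, mul_comm]

section Flatness

variable {ι : Type*} [Fintype ι] [DecidableEq ι]

/-- `‖∇L(y)‖₁`, the `ℓ¹` norm of the gradient of `L` at `y`. -/
noncomputable def gradientL1Norm (L : (ι → ℝ) → ℝ) (y : ι → ℝ) : ℝ :=
  ∑ i, |fderiv ℝ L y (Pi.single i 1)|

/-- The local flatness `γ(x, ε)`; balls in `ι → ℝ` are `ℓ^∞` balls. -/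
noncomputable def localFlatness (L : (ι → ℝ) → ℝ) (x : ι → ℝ) (ε : ℝ) : ℝ :=
  sSup (gradientL1Norm L '' closedBall x ε)

variable {L : (ι → ℝ) → ℝ}

theorem ContDiff.continuous_gradientL1Norm (hL : ContDiff ℝ 1 L) :
    Continuous (gradientL1Norm L) := by
  have hL' := hL.continuous_fderiv one_ne_zero
  unfold gradientL1Norm
  fun_prop

theorem ContDiff.norm_fderiv_le_localFlatness (hL : ContDiff ℝ 1 L) {x y : ι → ℝ} {ε : ℝ}
    (hy : y ∈ closedBall x ε) : ‖fderiv ℝ L y‖ ≤ localFlatness L x ε := by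
  have hbdd : BddAbove (gradientL1Norm L '' closedBall x ε) :=
    ((isCompact_closedBall x ε).image hL.continuous_gradientL1Norm).bddAbove
  exact (fderiv ℝ L y).opNorm_le_sum_norm_apply_single.trans
    (le_csSup hbdd (Set.mem_image_of_mem _ hy))

theorem ContDiff.sub_le_mul_localFlatness (hL : ContDiff ℝ 1 L) {x x' : ι → ℝ} {ε : ℝ}
    (hx' : x' ∈ closedBall x ε) : L x' - L x ≤ ε * localFlatness L x ε := by
  have hε : 0 ≤ ε := nonempty_closedBall.mp ⟨x', hx'⟩
  have hγ : 0 ≤ localFlatness L x ε :=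
    (norm_nonneg _).trans (hL.norm_fderiv_le_localFlatness hx')
  have mvt : ‖L x' - L x‖ ≤ localFlatness L x ε * ‖x' - x‖ :=
    (convex_closedBall x ε).norm_image_sub_le_of_norm_fderiv_le
      (fun z _ => hL.differentiable one_ne_zero z)
      (fun z hz => hL.norm_fderiv_le_localFlatness hz) (mem_closedBall_self hε) hx'
  calc L x' - L x ≤ ‖L x' - L x‖ := le_abs_self _
    _ ≤ localFlatness L x ε * ‖x' - x‖ := mvt
    _ ≤ localFlatness L x ε * ε := by gcongr; exact mem_closedBall_iff_norm.mp hx'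
    _ = ε * localFlatness L x ε := mul_comm _ _

end Flatness

theorem defense_guarantee_general (n : ℕ) (L : (Fin n → ℝ) → ℝ) (hL : ContDiff ℝ 1 L)
    (x : Fin n → ℝ) (ε c : ℝ)
    (h : ε * sSup ((fun x' => ∑ i, |fderiv ℝ L x' (Pi.single i 1)|) ''
        Metric.closedBall x ε) < c - L x) :
    ∀ x' ∈ Metric.closedBall x ε, L x' < c := by
  intro x' hx'
  have rise := hL.sub_le_mul_localFlatness hx'
  unfold localFlatness gradientL1Norm at rise
  linarith

/-- defense guarantee: if `L x < c` and `ε · γ(x,ε) < c - L x`, where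
`γ(x,ε) = sup_{x' ∈ B_∞(x,ε)} ‖∇L(x')‖₁`, then `L x' < c` on all of `B_∞(x,ε)`. -/
theorem defense_guarantee (n : ℕ) (L : (Fin n → ℝ) → ℝ) (hL : ContDiff ℝ 1 L)
    (x : Fin n → ℝ) (ε c : ℝ) (hε : 0 ≤ ε) (hx : L x < c)
    (h : ε * sSup ((fun x' => ∑ i, |fderiv ℝ L x' (Pi.single i 1)|) ''
        Metric.closedBall x ε) < c - L x) :
    ∀ x' ∈ Metric.closedBall x ε, L x' < c :=
  defense_guarantee_general n L hL x ε c h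
end
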